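/- With the same hypotheses (commuting formal multiplication matrices over K[z]), the residue classes of t_1,…,t_μ form a free K[z]-module basis of K[z][x_1,…,x_n]/(g_1,…,g_ν); in particular, K[z] → K[z][x_1,…,x_n]/(g_1,…,g_ν) is flat. -/

import Mathlib

/-!
The classes of the terms of `O` span the quotient: `x_k t` is either again in `O` or a border
term, and the border prebasis rewrites a border term as a combination of terms of `O`.

They are independent because, the `A_k` commuting, `p ↦ p(A_1, …, A_n) e_1` is a well-defined
`K[z]`-linear map `K[z][x] → K[z]^μ`, with `(x_k p)(A) e_1 = A_k (p(A) e_1)`. As `O` is an order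
ideal, induction along `O` shows that it sends each `t ∈ O` to the unit vector `e_t`, and then
each border term `b_j` to `(a_{1j}, …, a_{μj})`. So it kills every `g_j`, hence the ideal, and a
relation among the classes of `O` would be the same relation among unit vectors.
-/

open MvPolynomial Finsupp

open scoped Classical

/-- The border of a finite set of monomials (represented as exponent vectors). -/
noncomputable def borderSet (n : ℕ) (O : Finset (Fin n →₀ ℕ)) : Finset (Fin n →₀ ℕ) :=
  (O.biUnion (fun t => Finset.image (fun k => t + Finsupp.single k 1) Finset.univ)) \ O

theorem Finsupp.induction_add_single_one {σ : Type*} {motive : (σ →₀ ℕ) → Prop}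
    (zero : motive 0) (add_single : ∀ m k, motive m → motive (m + single k 1))
    (m : σ →₀ ℕ) : motive m := by
  induction m using Finsupp.induction with
  | zero => exact zero
  | single_add k e f _ _ ih =>
    have key : ∀ e : ℕ, motive (single k e + f) := fun e => by
      induction e with
      | zero => simpa using ih
      | succ e ihe => simpa only [single_add, add_right_comm] using add_single _ k ihe
    exact key e

theorem LinearIndependent.map_of_ker_le {ι R M N P : Type*} [Ring R] [AddCommGroup M]
    [Module R M] [AddCommGroup N] [Module R N] [AddCommGroup P] [Module R P] {v : ι → M}
    {f : M →ₗ[R] N} {g : M →ₗ[R] P} (hker : LinearMap.ker f ≤ LinearMap.ker g)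
    (hv : LinearIndependent R (g ∘ v)) : LinearIndependent R (f ∘ v) := by
  rw [linearIndependent_iff'] at hv ⊢
  intro s c hs i hi
  refine hv s c ?_ i hi
  have hf : ∑ j ∈ s, c j • v j ∈ LinearMap.ker f := by simpa [map_sum] using hs
  simpa [map_sum] using hker hf

namespace MvPolynomial

variable {R S σ : Type*} [CommSemiring R] [Semiring S] [Algebra R S]

open scoped IsMulCommutative in
noncomputable def aevalOfCommute (f : σ → S) (hf : ∀ i j, Commute (f i) (f j)) :
    MvPolynomial σ R →ₐ[R] S :=
  have : IsMulCommutative (Algebra.adjoin R (Set.range f)) :=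
    Algebra.isMulCommutative_adjoin R (by rintro _ ⟨i, rfl⟩ _ ⟨j, rfl⟩; exact hf i j)
  (Algebra.adjoin R (Set.range f)).val.comp
    (aeval fun i => ⟨f i, Algebra.subset_adjoin (Set.mem_range_self i)⟩)

@[simp]
theorem aevalOfCommute_X (f : σ → S) (hf : ∀ i j, Commute (f i) (f j)) (i : σ) :
    aevalOfCommute (R := R) f hf (X i) = f i := by
  simp [aevalOfCommute]

end MvPolynomial

section MulVecEval

open Matrix

variable {R ι σ : Type*} [CommRing R] [Fintype ι] [DecidableEq ι]
  (A : σ → Matrix ι ι R) (hA : ∀ k l, Commute (A k) (A l)) (i₀ : ι)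

noncomputable def mulVecEval : MvPolynomial σ R →ₗ[R] ι → R where
  toFun p := aevalOfCommute A hA p *ᵥ Pi.single i₀ 1
  map_add' p q := by rw [map_add, Matrix.add_mulVec]
  map_smul' c p := by rw [map_smul, Matrix.smul_mulVec]; rfl

theorem mulVecEval_apply (p : MvPolynomial σ R) :
    mulVecEval A hA i₀ p = aevalOfCommute A hA p *ᵥ Pi.single i₀ 1 := rfl

theorem mulVecEval_one : mulVecEval A hA i₀ 1 = Pi.single i₀ 1 := by
  rw [mulVecEval_apply, map_one, Matrix.one_mulVec]

theorem mulVecEval_mul (p q : MvPolynomial σ R) :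
    mulVecEval A hA i₀ (p * q) = aevalOfCommute A hA p *ᵥ mulVecEval A hA i₀ q := by
  rw [mulVecEval_apply, mulVecEval_apply, map_mul, Matrix.mulVec_mulVec]

theorem mulVecEval_mul_X (p : MvPolynomial σ R) (k : σ) :
    mulVecEval A hA i₀ (p * X k) = A k *ᵥ mulVecEval A hA i₀ p := by
  rw [mul_comm, mulVecEval_mul, aevalOfCommute_X]

end MulVecEval

section BorderPrebasis

variable {R : Type*} [CommRing R] {n : ℕ}

theorem mem_borderSet {O : Finset (Fin n →₀ ℕ)} {b : Fin n →₀ ℕ} :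
    b ∈ borderSet n O ↔ b ∉ O ∧ ∃ t ∈ O, ∃ k, b = t + single k 1 := by
  simp [borderSet, and_comm, eq_comm]

variable (O : Finset (Fin n →₀ ℕ)) (a : (Fin n →₀ ℕ) → (Fin n →₀ ℕ) → R)

/-- Column `i` is the coordinate vector of `x_k t_i` read off the border prebasis
`b - ∑ t ∈ O, a b t • t`: the unit vector `e_{x_k t_i}` if `x_k t_i ∈ O`, and `(a b t)_{t ∈ O}`
if `b = x_k t_i` is a border term. -/
noncomputable def formalMulMatrix (k : Fin n) : Matrix O O R :=
  Matrix.of fun (r i : O) =>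
    if i.1 + single k 1 ∈ O then (if r.1 = i.1 + single k 1 then 1 else 0)
    else a (i.1 + single k 1) r

noncomputable def borderPrebasisIdeal : Ideal (MvPolynomial (Fin n) R) :=
  Ideal.span {p | ∃ b ∈ borderSet n O, p = monomial b 1 - ∑ t ∈ O, C (a b t) * monomial t 1}

local notation "mkO" => Ideal.Quotient.mkₐ R (borderPrebasisIdeal O a)

theorem mk_monomial_of_mem_borderSet {b : Fin n →₀ ℕ} (hb : b ∈ borderSet n O) :
    mkO (monomial b 1) = ∑ t ∈ O, a b t • mkO (monomial t 1) := by
  have hg : monomial b 1 - ∑ t ∈ O, C (a b t) * monomial t 1 ∈ borderPrebasisIdeal O a :=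
    Ideal.subset_span ⟨b, hb, rfl⟩
  have hsum : ∑ t ∈ O, a b t • mkO (monomial t 1) = mkO (∑ t ∈ O, C (a b t) * monomial t 1) := by
    simp only [map_sum, ← smul_eq_C_mul, map_smul]
  rw [hsum]
  exact Ideal.Quotient.eq.2 hg

theorem span_mk_monomial_eq_top (h0 : 0 ∈ O) :
    Submodule.span R (Set.range fun t : O => mkO (monomial t.1 1)) = ⊤ := by
  set SP := Submodule.span R (Set.range fun t : O => mkO (monomial t.1 1))
  have mem_SP {t} (ht : t ∈ O) : mkO (monomial t 1) ∈ SP := Submodule.subset_span ⟨⟨t, ht⟩, rfl⟩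
  have mul_X_mem (k : Fin n) : ∀ v ∈ SP, v * mkO (X k) ∈ SP := by
    refine fun v hv => (Submodule.span_le (p := SP.comap (LinearMap.mulRight R _))).2 ?_ hv
    rintro _ ⟨t, rfl⟩
    change mkO (monomial t.1 1) * mkO (X k) ∈ SP
    rw [← map_mul, X, monomial_mul, mul_one]
    by_cases ht : t.1 + single k 1 ∈ O
    · exact mem_SP ht
    · rw [mk_monomial_of_mem_borderSet O a (mem_borderSet.2 ⟨ht, t, t.2, k, rfl⟩)]
      exact Submodule.sum_mem _ fun t' ht' => Submodule.smul_mem _ _ (mem_SP ht')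
  rw [eq_top_iff]
  rintro v -
  obtain ⟨p, rfl⟩ := Ideal.Quotient.mkₐ_surjective R _ v
  induction p using MvPolynomial.induction_on with
  | C c =>
    rw [C_eq_smul_one, map_smul, one_def]
    exact Submodule.smul_mem _ _ (mem_SP h0)
  | add p q hp hq => rw [map_add]; exact add_mem hp hq
  | mul_X p k hp => rw [map_mul]; exact mul_X_mem k _ hp

variable {O a}

theorem mulVecEval_monomial_of_mem (h0 : 0 ∈ O) (hO : ∀ t ∈ O, ∀ s ≤ t, s ∈ O)
    (hcomm : ∀ k l, Commute (formalMulMatrix O a k) (formalMulMatrix O a l)) {t : Fin n →₀ ℕ}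
    (ht : t ∈ O) :
    mulVecEval _ hcomm ⟨0, h0⟩ (monomial t 1) = Pi.single ⟨t, ht⟩ 1 := by
  induction t using Finsupp.induction_add_single_one with
  | zero => rw [← one_def, mulVecEval_one]
  | add_single m k ih =>
    rw [monomial_add_single, pow_one, mulVecEval_mul_X, ih (hO _ ht m le_self_add),
      Matrix.mulVec_single_one]
    ext r
    simp [formalMulMatrix, ht, Pi.single_apply, Subtype.ext_iff]

theorem mulVecEval_monomial_of_mem_borderSet (h0 : 0 ∈ O) (hO : ∀ t ∈ O, ∀ s ≤ t, s ∈ O)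
    (hcomm : ∀ k l, Commute (formalMulMatrix O a k) (formalMulMatrix O a l))
    {b : Fin n →₀ ℕ} (hb : b ∈ borderSet n O) :
    mulVecEval _ hcomm ⟨0, h0⟩ (monomial b 1) = fun r : O => a b r := by
  obtain ⟨hbO, t, ht, k, rfl⟩ := mem_borderSet.1 hb
  rw [monomial_add_single, pow_one, mulVecEval_mul_X, mulVecEval_monomial_of_mem h0 hO hcomm ht,
    Matrix.mulVec_single_one]
  ext r
  simp [formalMulMatrix, hbO]

theorem mulVecEval_eq_zero_of_mem_borderPrebasisIdeal (h0 : 0 ∈ O)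
    (hO : ∀ t ∈ O, ∀ s ≤ t, s ∈ O)
    (hcomm : ∀ k l, Commute (formalMulMatrix O a k) (formalMulMatrix O a l))
    {p : MvPolynomial (Fin n) R} (hp : p ∈ borderPrebasisIdeal O a) :
    mulVecEval _ hcomm ⟨0, h0⟩ p = 0 := by
  induction hp using Submodule.span_induction with
  | mem _ hg =>
    obtain ⟨b, hb, rfl⟩ := hg
    ext r
    have hcoord : ∀ t ∈ O, mulVecEval _ hcomm ⟨0, h0⟩ (C (a b t) * monomial t 1) r =
        if t = r.1 then a b t else 0 := by
      intro t ht
      rw [← smul_eq_C_mul, map_smul, mulVecEval_monomial_of_mem h0 hO hcomm ht]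
      simp [Pi.single_apply, Subtype.ext_iff, eq_comm]
    simp only [map_sub, map_sum, Pi.sub_apply, Finset.sum_apply, Finset.sum_congr rfl hcoord,
      Finset.sum_ite_eq', r.2, if_true, mulVecEval_monomial_of_mem_borderSet h0 hO hcomm hb,
      sub_self, Pi.zero_apply]
  | zero => exact map_zero _
  | add x y _ _ hx hy => rw [map_add, hx, hy, add_zero]
  | smul c x _ hx => rw [smul_eq_mul, mulVecEval_mul, hx, Matrix.mulVec_zero]

theorem linearIndependent_mk_monomial (h0 : 0 ∈ O) (hO : ∀ t ∈ O, ∀ s ≤ t, s ∈ O)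
    (hcomm : ∀ k l, Commute (formalMulMatrix O a k) (formalMulMatrix O a l)) :
    LinearIndependent R fun t : O => mkO (monomial t.1 1) := by
  have hcoords : (mulVecEval _ hcomm ⟨0, h0⟩ ∘ fun t : O => monomial t.1 1) =
      fun t => Pi.single t 1 :=
    funext fun t => mulVecEval_monomial_of_mem h0 hO hcomm t.2
  refine LinearIndependent.map_of_ker_le (f := (mkO).toLinearMap) (fun p hp => ?_)
    (hcoords ▸ Pi.linearIndependent_single_one O R)
  exact mulVecEval_eq_zero_of_mem_borderPrebasisIdeal h0 hO hcomm
    (Ideal.Quotient.eq_zero_iff_mem.1 hp)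

end BorderPrebasis

/-- If the formal multiplication matrices over `K[z]` of `g_j = b_j − Σ_i a_{ij}(z) t_i`
pairwise commute, then the residue classes of the order ideal terms form a free `K[z]`-module
basis of `K[z][x_1,…,x_n]/(g_1,…,g_ν)`; in particular this algebra is flat over `K[z]`. -/
theorem family_free_over_Kz (K : Type*) [Field K] (n : ℕ)
    (O : Finset (Fin n →₀ ℕ)) (h0 : (0 : Fin n →₀ ℕ) ∈ O)
    (hO : ∀ t ∈ O, ∀ s : Fin n →₀ ℕ, s ≤ t → s ∈ O)
    (a : (Fin n →₀ ℕ) → (Fin n →₀ ℕ) → Polynomial K)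
    (A : Fin n → Matrix ↥O ↥O (Polynomial K))
    (hA : ∀ (k : Fin n) (r i : ↥O), A k r i =
      if ((i : Fin n →₀ ℕ) + Finsupp.single k 1) ∈ O then
        (if (r : Fin n →₀ ℕ) = (i : Fin n →₀ ℕ) + Finsupp.single k 1 then 1 else 0)
      else a ((i : Fin n →₀ ℕ) + Finsupp.single k 1) r)
    (hcomm : ∀ k l : Fin n, A k * A l = A l * A k)
    (J : Ideal (MvPolynomial (Fin n) (Polynomial K)))
    (hJ : J = Ideal.span {p | ∃ b ∈ borderSet n O,
      p = monomial b 1 - ∑ t ∈ O, MvPolynomial.C (a b t) * monomial t 1}) :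
    LinearIndependent (Polynomial K)
      (fun t : ↥O => Ideal.Quotient.mk J (monomial (t : Fin n →₀ ℕ) (1 : Polynomial K))) ∧
    Submodule.span (Polynomial K)
      (Set.range (fun t : ↥O => Ideal.Quotient.mk J
        (monomial (t : Fin n →₀ ℕ) (1 : Polynomial K)))) = ⊤ ∧
    Module.Flat (Polynomial K) (MvPolynomial (Fin n) (Polynomial K) ⧸ J) := by
  obtain rfl : A = formalMulMatrix O a := funext fun k => Matrix.ext (hA k)
  obtain rfl : J = borderPrebasisIdeal O a := hJ
  have hli := linearIndependent_mk_monomial h0 hO hcomm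
  have hspan := span_mk_monomial_eq_top O a h0
  have := Module.Free.of_basis (Module.Basis.mk hli hspan.ge)
  exact ⟨hli, hspan, inferInstance⟩
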